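/- arXiv:1301.1857 — 4 statements merged into one kernel-verified Lean document; each statement's English description precedes it below -/
import Mathlib

section
/- (Lemma 2.4, maximum version) Let x, y ∈ ℝⁿ with y strictly decreasing (y₁ > y₂ > ⋯ > yₙ), and suppose the coordinates of x take at least k distinct values, i.e. the set {x₁, …, xₙ} has cardinality ≥ k. Then the set I_M(x,y) = {P : P is an n×n permutation matrix and Σᵢ (Pᵀ *ᵥ x)ᵢ · yᵢ = M(x,y)} has cardinality at most (n−k+1)!. -/
open Matrix BigOperators

/-- A matrix is doubly stochastic: nonnegative entries, row sums and column sums all 1. -/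
def IsDoublyStochastic {n : ℕ} (A : Matrix (Fin n) (Fin n) ℝ) : Prop :=
  (∀ i j, 0 ≤ A i j) ∧ (∀ i, ∑ j, A i j = 1) ∧ (∀ j, ∑ i, A i j = 1)

/-- `Maj x y` means `x ≺ y`: `x` is majorized by `y`. -/
def Maj {n : ℕ} (x y : Fin n → ℝ) : Prop :=
  ∃ A : Matrix (Fin n) (Fin n) ℝ, IsDoublyStochastic A ∧ x = A *ᵥ y

/-- `MajEq x y` means `x ∼ y`: mutual majorization. -/
def MajEq {n : ℕ} (x y : Fin n → ℝ) : Prop := Maj x y ∧ Maj y x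

/-- `P` is a permutation matrix. -/
def IsPermMatrix {n : ℕ} (P : Matrix (Fin n) (Fin n) ℝ) : Prop :=
  ∃ σ : Equiv.Perm (Fin n), P = σ.permMatrix ℝ

/-- The increasing rearrangement `x↑` of a vector. -/
noncomputable def incSort {n : ℕ} (x : Fin n → ℝ) : Fin n → ℝ := x ∘ Tuple.sort x

/-- The decreasing rearrangement `x↓` of a vector. -/
noncomputable def decSort {n : ℕ} (x : Fin n → ℝ) : Fin n → ℝ :=
  fun i => (x ∘ Tuple.sort x) i.rev

/-!
By the equality case of the rearrangement inequality, against a strictly decreasing `y` a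
rearrangement `x ∘ σ` attains `M(x, y)` only if it is itself decreasing, i.e. `x ∘ σ = x↓`.
These `σ` form a coset of the stabilizer of `x`, which is the product of the symmetric groups
of the level sets of `x`. With `m` level sets of sizes `c₁, …, cₘ ≥ 1`, the inequality
`(a + 1)! (b + 1)! ≤ (a + b + 1)!` gives `∏ cᵢ! ≤ (n - m + 1)!`, and `m ≥ k`.
-/

open Equiv Finset
open scoped Nat

namespace Nat

theorem factorial_succ_mul_factorial_succ_le (a b : ℕ) :
    (a + 1)! * (b + 1)! ≤ (a + b + 1)! := by
  induction b with
  | zero => simp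
  | succ b ih =>
    calc (a + 1)! * (b + 1 + 1)! = (a + 1)! * (b + 1)! * (b + 2) := by
          rw [factorial_succ (b + 1)]; ring
      _ ≤ (a + b + 1)! * (a + b + 2) := by gcongr; omega
      _ = (a + (b + 1) + 1)! := by
          rw [show a + (b + 1) + 1 = (a + b + 1) + 1 by ring, factorial_succ (a + b + 1)]; ring

theorem prod_factorial_succ_le {ι : Type*} (s : Finset ι) (m : ι → ℕ) :
    ∏ i ∈ s, (m i + 1)! ≤ (∑ i ∈ s, m i + 1)! := by
  classical
  induction s using Finset.induction_on with
  | empty => simp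
  | insert a s ha ih =>
    rw [prod_insert ha, sum_insert ha, add_assoc]
    exact (Nat.mul_le_mul_left _ ih).trans (factorial_succ_mul_factorial_succ_le _ _)

end Nat

theorem Equiv.Perm.ncard_setOf_comp_eq_le {ι α : Type*} [Fintype ι] [DecidableEq α]
    (f : ι → α) :
    {σ : Perm ι | f ∘ σ = f}.ncard ≤ (Fintype.card ι - #(univ.image f) + 1)! := by
  classical
  set c : α → ℕ := fun v => #{i | f i = v}
  have hc_pos : ∀ v ∈ univ.image f, 1 ≤ c v := by
    simp only [mem_image, mem_univ, true_and, forall_exists_index, forall_apply_eq_imp_iff]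
    exact fun i => card_pos.mpr ⟨i, by simp⟩
  have hc_sum : ∑ v ∈ univ.image f, (c v - 1) = Fintype.card ι - #(univ.image f) := by
    rw [sum_tsub_distrib _ hc_pos, ← card_eq_sum_ones, ← Finset.card_univ,
      card_eq_sum_card_image f univ]
  calc {σ : Perm ι | f ∘ σ = f}.ncard
      = ∏ v ∈ univ.image f, (c v)! := by
        rw [← Nat.card_coe_set_eq, Set.coe_ofPred, Nat.card_eq_fintype_card,
          DomMulAct.stabilizer_card']
        simp only [c, Fintype.card_subtype]
    _ = ∏ v ∈ univ.image f, (c v - 1 + 1)! :=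
        prod_congr rfl fun v hv => by rw [Nat.sub_add_cancel (hc_pos v hv)]
    _ ≤ _ := hc_sum ▸ Nat.prod_factorial_succ_le _ _

theorem Equiv.Perm.ncard_setOf_comp_eq_comp {ι α : Type*} (f : ι → α) (ρ : Perm ι) :
    {σ : Perm ι | f ∘ σ = f ∘ ρ}.ncard = {σ : Perm ι | f ∘ σ = f}.ncard := by
  refine (Set.ncard_image_of_injective _ (mul_left_injective ρ⁻¹)).symm.trans (congrArg _ ?_)
  ext σ
  refine ⟨?_, fun h => ⟨σ * ρ, ?_, mul_inv_cancel_right σ ρ⟩⟩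
  · rintro ⟨τ, hτ, rfl⟩
    simp only [Set.mem_ofPred_eq] at hτ ⊢
    rw [Perm.coe_mul, ← Function.comp_assoc, hτ, Function.comp_assoc, ← Perm.coe_mul,
      mul_inv_cancel, Perm.coe_one, Function.comp_id]
  · simp only [Set.mem_ofPred_eq] at h ⊢
    rw [Perm.coe_mul, ← Function.comp_assoc, h]

theorem decSort_eq_comp {n : ℕ} (x : Fin n → ℝ) :
    decSort x = x ∘ (Fin.revPerm.trans (Tuple.sort x)) := rfl

theorem antitone_decSort {n : ℕ} (x : Fin n → ℝ) : Antitone (decSort x) :=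
  (Tuple.monotone_sort x).comp_antitone Fin.rev_anti

theorem comp_eq_decSort_of_antitone {n : ℕ} {x : Fin n → ℝ} {σ : Perm (Fin n)}
    (h : Antitone (x ∘ σ)) : x ∘ σ = decSort x := by
  rw [decSort_eq_comp] at *
  exact Tuple.unique_antitone h (antitone_decSort x)

theorem decSort_eq_self_of_antitone {n : ℕ} {y : Fin n → ℝ} (hy : Antitone y) :
    decSort y = y :=
  (comp_eq_decSort_of_antitone (σ := 1) hy).symm

theorem comp_eq_decSort_of_sum_mul_eq {n : ℕ} {x y : Fin n → ℝ} (hy : StrictAnti y)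
    {σ : Perm (Fin n)} (h : ∑ i, x (σ i) * y i = ∑ i, decSort x i * decSort y i) :
    x ∘ σ = decSort x := by
  set e : Perm (Fin n) := Fin.revPerm.trans (Tuple.sort x)
  have hmono : Monovary (decSort x) y := (antitone_decSort x).monovary hy.antitone
  have hcomp : decSort x ∘ ⇑(e⁻¹ * σ) = x ∘ σ := by
    rw [decSort_eq_comp, Function.comp_assoc, ← Perm.coe_mul, mul_inv_cancel_left]
  have hcomp_apply (i : Fin n) : decSort x ((e⁻¹ * σ) i) = x (σ i) := congrFun hcomp i
  rw [decSort_eq_self_of_antitone hy.antitone] at h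
  have hsum : ∑ i, decSort x ((e⁻¹ * σ) i) * y i = ∑ i, decSort x i * y i := by
    simpa only [hcomp_apply] using h
  have hmv := hmono.sum_comp_perm_mul_eq_sum_mul_iff.mp hsum
  rw [hcomp] at hmv
  exact comp_eq_decSort_of_antitone (hy.trans_monovary hmv)

/-- Lemma 2.4, maximum version: if `x` has at least `k` distinct
coordinate values and `y` is strictly decreasing, then
`|I_M(x,y)| ≤ (n - k + 1)!`. -/
theorem card_IM_le {n k : ℕ} (x y : Fin n → ℝ) (hy : StrictAnti y)
    (hx : k ≤ (Finset.univ.image x).card) :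
    {P : Matrix (Fin n) (Fin n) ℝ | IsPermMatrix P ∧
      ∑ i, (Pᵀ *ᵥ x) i * y i = ∑ i, decSort x i * decSort y i}.ncard
      ≤ (n - k + 1).factorial := by
  classical
  have hsub : {P : Matrix (Fin n) (Fin n) ℝ | IsPermMatrix P ∧
      ∑ i, (Pᵀ *ᵥ x) i * y i = ∑ i, decSort x i * decSort y i} ⊆
      (fun σ : Perm (Fin n) => (σ.permMatrix ℝ)ᵀ) '' {σ | x ∘ σ = decSort x} := by
    rintro _ ⟨⟨τ, rfl⟩, hsum⟩
    refine ⟨τ⁻¹, comp_eq_decSort_of_sum_mul_eq hy ?_, by simp⟩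
    simpa [permMatrix_mulVec] using hsum
  calc _ ≤ {σ : Perm (Fin n) | x ∘ σ = decSort x}.ncard :=
        (Set.ncard_le_ncard hsub).trans (Set.ncard_image_le (Set.toFinite _))
    _ = {σ : Perm (Fin n) | x ∘ σ = x}.ncard := by
        rw [decSort_eq_comp, Perm.ncard_setOf_comp_eq_comp]
    _ ≤ (n - #(univ.image x) + 1)! := by
        simpa using Perm.ncard_setOf_comp_eq_le x
    _ ≤ (n - k + 1)! := Nat.factorial_le (by omega)
end

section
/- (Claim 1) Let n ≥ 2, let α ∈ ℝⁿ have strictly decreasing coordinates (α₁ > α₂ > ⋯ > αₙ), and let A be an n×n real matrix such that A *ᵥ (P *ᵥ α) ∼ A *ᵥ α for every n×n permutation matrix P. Then all column sums of A are equal: Σₗ A l s = Σₗ A l t for all indices s, t. -/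
open Matrix BigOperators

lemma sum_mulVec {n : ℕ} (B : Matrix (Fin n) (Fin n) ℝ) (v : Fin n → ℝ) :
    ∑ i, (B *ᵥ v) i = ∑ j, (∑ i, B i j) * v j := by
  simp only [Matrix.mulVec, dotProduct, Finset.sum_mul]
  rw [Finset.sum_comm]

lemma sum_eq_of_maj {n : ℕ} {x y : Fin n → ℝ} (h : Maj x y) : ∑ i, x i = ∑ i, y i := by
  obtain ⟨B, ⟨_, _, hcol⟩, hx⟩ := h
  rw [hx, sum_mulVec]
  simp [hcol]

lemma permMatrix_mulVec {n : ℕ} (σ : Equiv.Perm (Fin n)) (v : Fin n → ℝ) :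
    (σ.permMatrix ℝ) *ᵥ v = fun i => v (σ i) := by
  funext i
  simp [Matrix.mulVec, dotProduct, Equiv.Perm.permMatrix, PEquiv.toMatrix,
    Equiv.toPEquiv]

/-- Claim 1: if `A *ᵥ (P *ᵥ α) ∼ A *ᵥ α` for all permutation
matrices `P`, then all column sums of `A` are equal. -/
theorem colSums_eq {n : ℕ} (hn : 2 ≤ n) (α : Fin n → ℝ) (hα : StrictAnti α)
    (A : Matrix (Fin n) (Fin n) ℝ)
    (hA : ∀ P : Matrix (Fin n) (Fin n) ℝ, IsPermMatrix P →
      MajEq (A *ᵥ (P *ᵥ α)) (A *ᵥ α)) :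
    ∀ s t : Fin n, ∑ l, A l s = ∑ l, A l t := by
  intro s t
  rcases eq_or_ne s t with rfl | hst
  · rfl
  set c : Fin n → ℝ := fun j => ∑ l, A l j with hc
  set σ := Equiv.swap s t with hσ
  have hmaj := (hA (σ.permMatrix ℝ) ⟨σ, rfl⟩).1
  have hsum := sum_eq_of_maj hmaj
  rw [sum_mulVec, sum_mulVec, permMatrix_mulVec] at hsum
  -- hsum : ∑ j, c j * α (σ j) = ∑ j, c j * α j
  have hzero : ∑ j, c j * (α (σ j) - α j) = 0 := by
    simp only [mul_sub, Finset.sum_sub_distrib]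
    rw [sub_eq_zero]
    exact hsum
  have hsubset : ({s, t} : Finset (Fin n)) ⊆ Finset.univ := Finset.subset_univ _
  have hvanish : ∀ j ∈ Finset.univ, j ∉ ({s, t} : Finset (Fin n)) →
      c j * (α (σ j) - α j) = 0 := by
    intro j _ hj
    simp only [Finset.mem_insert, Finset.mem_singleton, not_or] at hj
    rw [hσ, Equiv.swap_apply_of_ne_of_ne hj.1 hj.2]
    ring
  have hpair : ∑ j ∈ ({s, t} : Finset (Fin n)), c j * (α (σ j) - α j) = 0 := by
    rw [Finset.sum_subset hsubset hvanish]
    exact hzero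
  rw [Finset.sum_pair hst, hσ, Equiv.swap_apply_left, Equiv.swap_apply_right] at hpair
  have hne : α t - α s ≠ 0 := sub_ne_zero.mpr (fun h => hst (hα.injective h.symm))
  have : (c s - c t) * (α t - α s) = 0 := by linarith [hpair]
  have := (mul_eq_zero.mp this).resolve_right hne
  linarith
end

section
/- (Claim 2, Step 1) Let n ≥ 3, let α ∈ ℝⁿ have strictly decreasing coordinates (α₁ > α₂ > ⋯ > αₙ), and let A be an n×n real matrix with all entries positive such that A *ᵥ (P *ᵥ α) ∼ A *ᵥ α for every n×n permutation matrix P. If every row of A is nonconstant (each row has at least two unequal entries), then every row of A takes exactly two distinct values, i.e. for each row i the set {A i 1, …, A i n} has cardinality exactly 2. -/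
open Matrix BigOperators

/-!
Mutual majorization preserves `∑ i, |x i - c|` for every `c`; combining three such sums into a
tent function that vanishes away from `x i` shows that every entry of `x` is an entry of `y`.
Hence, for a row `r` of `A`, every rearrangement sum `∑ s, r s * α (σ s)` is an entry of `A *ᵥ α`,
so these sums take at most `n` values. On the other hand, if the weights `w` take at least three
values, the rearrangement sums take at least `n + 1` values. Sort `w` decreasingly and remove its
top weight: if the remaining weights still take three values, the sums pairing `α 0` with the top
weight, together with one sum below all of them, give a new value; otherwise the top weight is
strictly largest, and pairing it with `α k` for `k = 0, …, n - 1` gives a strictly decreasing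
chain of sums, below which a swap among the remaining two-valued weights adds one more.
-/

open Finset Equiv

section Majorization

variable {n : ℕ} {x y : Fin n → ℝ}

theorem Maj.sum_le_sum_of_convexOn (h : Maj x y) {φ : ℝ → ℝ} (hφ : ConvexOn ℝ Set.univ φ) :
    ∑ i, φ (x i) ≤ ∑ i, φ (y i) := by
  obtain ⟨B, ⟨hB₀, hBrow, hBcol⟩, rfl⟩ := h
  calc ∑ i, φ ((B *ᵥ y) i) ≤ ∑ i, ∑ j, B i j * φ (y j) :=
        sum_le_sum fun i _ => by
          simpa [mulVec, dotProduct] using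
            hφ.map_sum_le (fun j _ => hB₀ i j) (hBrow i) fun j _ => Set.mem_univ (y j)
    _ = ∑ j, (∑ i, B i j) * φ (y j) := by simp only [sum_mul]; exact sum_comm
    _ = ∑ i, φ (y i) := by simp [hBcol]

theorem MajEq.sum_abs_sub_eq (h : MajEq x y) (c : ℝ) :
    ∑ i, |x i - c| = ∑ i, |y i - c| := by
  have hc : ConvexOn ℝ Set.univ fun t : ℝ => |t - c| := by
    simpa [Real.dist_eq] using convexOn_univ_dist c
  exact le_antisymm (h.1.sum_le_sum_of_convexOn hc) (h.2.sum_le_sum_of_convexOn hc)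

def tent (v ε t : ℝ) : ℝ := |t - (v - ε)| + |t - (v + ε)| - 2 * |t - v|

lemma tent_nonneg (v ε t : ℝ) : 0 ≤ tent v ε t := by
  have := abs_add_le (t - (v - ε)) (t - (v + ε))
  rw [show t - (v - ε) + (t - (v + ε)) = 2 * (t - v) by ring, abs_mul, abs_two] at this
  unfold tent
  linarith

lemma tent_self {ε : ℝ} (hε : 0 ≤ ε) (v : ℝ) : tent v ε v = 2 * ε := by
  simp only [tent, sub_sub_cancel, sub_add_cancel_left, abs_neg, abs_of_nonneg hε, sub_self,
    abs_zero, mul_zero, sub_zero]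
  ring

lemma tent_eq_zero {v ε t : ℝ} (hε : 0 ≤ ε) (h : ε ≤ |t - v|) : tent v ε t = 0 := by
  unfold tent
  rcases le_abs'.1 h with h | h
  · rw [abs_of_nonpos (by linarith), abs_of_nonpos (by linarith), abs_of_nonpos (by linarith)]
    ring
  · rw [abs_of_nonneg (by linarith), abs_of_nonneg (by linarith), abs_of_nonneg (by linarith)]
    ring

lemma MajEq.sum_tent_eq (h : MajEq x y) (v ε : ℝ) :
    ∑ i, tent v ε (x i) = ∑ i, tent v ε (y i) := by
  simp only [tent, sum_sub_distrib, sum_add_distrib, ← mul_sum, h.sum_abs_sub_eq]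

theorem MajEq.exists_eq (h : MajEq x y) (i : Fin n) : ∃ k, y k = x i := by
  by_contra! hne
  obtain ⟨k₀, -, hk₀⟩ := exists_min_image univ (fun k => |y k - x i|) ⟨i, mem_univ i⟩
  have hε : 0 < |y k₀ - x i| := abs_pos.2 (sub_ne_zero.2 (hne k₀))
  have hy : ∑ k, tent (x i) |y k₀ - x i| (y k) = 0 :=
    sum_eq_zero fun k _ => tent_eq_zero hε.le (hk₀ k (mem_univ k))
  have hx : 2 * |y k₀ - x i| ≤ ∑ k, tent (x i) |y k₀ - x i| (x k) := by
    rw [← tent_self hε.le (x i)]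
    exact single_le_sum (f := fun k => tent (x i) |y k₀ - x i| (x k))
      (fun k _ => tent_nonneg _ _ _) (mem_univ i)
  linarith [h.sum_tent_eq (x i) |y k₀ - x i|]

end Majorization

theorem Fintype.sum_mul_comp_swap {ι R : Type*} [Fintype ι] [DecidableEq ι] [CommRing R]
    (u v : ι → R) (a b : ι) :
    ∑ t, u t * v (swap a b t) = ∑ t, u t * v t - (u a - u b) * (v a - v b) := by
  rcases eq_or_ne a b with rfl | hab
  · simp
  rw [eq_sub_iff_add_eq, ← eq_sub_iff_add_eq', ← sum_sub_distrib,
    Fintype.sum_eq_add a b hab fun t ht => by simp [swap_apply_of_ne_of_ne ht.1 ht.2]]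
  simp only [swap_apply_left, swap_apply_right]
  ring

theorem Fin.cycleRange_symm_succ_eq_mul_swap {m : ℕ} (i : Fin (m + 1)) :
    i.succ.cycleRange.symm = i.castSucc.cycleRange.symm * swap 0 i.succ := by
  ext t
  cases t using Fin.cases with
  | zero => simp
  | succ j =>
    rcases lt_trichotomy j i with hji | rfl | hij
    · rw [Perm.mul_apply, swap_apply_of_ne_of_ne (succ_ne_zero j) (succ_inj.not.2 hji.ne),
        cycleRange_symm_succ, cycleRange_symm_succ, succAbove_succ_of_le _ _ hji.le,
        succAbove_castSucc_of_lt _ _ hji]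
    · simp
    · rw [Perm.mul_apply, swap_apply_of_ne_of_ne (succ_ne_zero j) (succ_inj.not.2 hij.ne'),
        cycleRange_symm_succ, cycleRange_symm_succ, succAbove_succ_of_lt _ _ hij,
        succAbove_castSucc_of_le _ _ hij.le]

lemma Antitone.lt_of_one_lt_card_image {β : Type*} [LinearOrder β] {m : ℕ}
    {f : Fin (m + 1) → β} (hf : Antitone f) (h : 1 < #(univ.image f)) : f (Fin.last m) < f 0 := by
  by_contra! hle
  have hconst : ∀ t, f t = f 0 := fun t =>
    le_antisymm (hf (Fin.zero_le t)) (hle.trans (hf (Fin.le_last t)))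
  refine h.not_ge (card_le_one.2 ?_)
  simp only [mem_image, mem_univ, true_and]
  rintro _ ⟨s, rfl⟩ _ ⟨t, rfl⟩
  rw [hconst s, hconst t]

lemma Fin.univ_image_eq_insert_tail {m : ℕ} {β : Type*} [DecidableEq β] (f : Fin (m + 1) → β) :
    univ.image f = insert (f 0) (univ.image (Fin.tail f)) := by
  rw [Fin.univ_succ, cons_eq_insert, image_insert, map_eq_image, image_image]
  rfl

section Rearrangement

variable {m n : ℕ}

def rearrangementSum (α w : Fin n → ℝ) (σ : Perm (Fin n)) : ℝ := ∑ t, w t * α (σ t)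

noncomputable def rearrangementSums (α w : Fin n → ℝ) : Finset ℝ :=
  univ.image (rearrangementSum α w)

lemma rearrangementSum_mem (α w : Fin n → ℝ) (σ : Perm (Fin n)) :
    rearrangementSum α w σ ∈ rearrangementSums α w :=
  mem_image_of_mem _ (mem_univ σ)

lemma rearrangementSum_mul_swap (α w : Fin n → ℝ) (σ : Perm (Fin n)) (a b : Fin n) :
    rearrangementSum α w (σ * swap a b) =
      rearrangementSum α w σ - (w a - w b) * (α (σ a) - α (σ b)) :=
  Fintype.sum_mul_comp_swap w (α ∘ σ) a b

lemma rearrangementSum_decomposeFin_symm_zero (α w : Fin (m + 1) → ℝ) (τ : Perm (Fin m)) :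
    rearrangementSum α w (Perm.decomposeFin.symm (0, τ)) =
      w 0 * α 0 + rearrangementSum (Fin.tail α) (Fin.tail w) τ := by
  simp [rearrangementSum, Fin.sum_univ_succ, Fin.tail]

lemma rearrangementSums_comp_perm (α w : Fin n → ℝ) (e : Perm (Fin n)) :
    rearrangementSums α (w ∘ e) = rearrangementSums α w := by
  have key : ∀ (w : Fin n → ℝ) (e : Perm (Fin n)),
      rearrangementSums α (w ∘ e) ⊆ rearrangementSums α w := by
    intro w e z hz
    obtain ⟨σ, -, rfl⟩ := mem_image.1 hz
    convert rearrangementSum_mem α w (σ * e⁻¹) using 1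
    exact (e.symm.sum_comp _).symm.trans (by simp [rearrangementSum])
  refine (key w e).antisymm ?_
  simpa [Function.comp_assoc] using key (w ∘ e) e⁻¹

lemma card_rearrangementSums_tail_lt {α w : Fin (m + 2) → ℝ} (hα : StrictAnti α)
    (hw : w (Fin.last _) < w 0) :
    #(rearrangementSums (Fin.tail α) (Fin.tail w)) < #(rearrangementSums α w) := by
  set shifted := (rearrangementSums (Fin.tail α) (Fin.tail w)).image (w 0 * α 0 + ·)
  have hshifted : shifted ⊆ rearrangementSums α w := by
    simp only [shifted, rearrangementSums, image_image, image_subset_iff, mem_univ, forall_const]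
    intro τ
    rw [Function.comp_apply, ← rearrangementSum_decomposeFin_symm_zero]
    exact rearrangementSum_mem α w _
  obtain ⟨τ₀, -, hτ₀⟩ := exists_min_image univ (rearrangementSum (Fin.tail α) (Fin.tail w))
    univ_nonempty
  set σ₀ := Perm.decomposeFin.symm ((0 : Fin (m + 2)), τ₀)
  -- Exchanging the partners of the top and bottom weights in `σ₀` undercuts every shifted sum.
  have hbelow : ∀ z ∈ shifted, rearrangementSum α w (σ₀ * swap 0 (Fin.last _)) < z := by
    simp only [shifted, rearrangementSums, image_image, mem_image, mem_univ, true_and]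
    rintro _ ⟨τ, rfl⟩
    have hσ₀ : σ₀ (Fin.last _) ≠ 0 := by
      rw [← Perm.decomposeFin_symm_apply_zero 0 τ₀]
      exact σ₀.injective.ne (Fin.last_pos.ne')
    have hgap := mul_pos (sub_pos.2 hw) (sub_pos.2 (hα (Fin.pos_iff_ne_zero.2 hσ₀)))
    rw [rearrangementSum_mul_swap, Perm.decomposeFin_symm_apply_zero,
      rearrangementSum_decomposeFin_symm_zero, Function.comp_apply]
    linarith [hτ₀ τ (mem_univ τ)]
  calc #(rearrangementSums (Fin.tail α) (Fin.tail w)) = #shifted :=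
        (card_image_of_injective _ (add_right_injective _)).symm
    _ < #(rearrangementSums α w) := card_lt_card <| (ssubset_iff_of_subset hshifted).2
        ⟨_, rearrangementSum_mem α w _, fun h => (hbelow _ h).false⟩

lemma card_rearrangementSums_of_head_lt {α w : Fin (m + 2) → ℝ} (hα : StrictAnti α)
    (hhead : ∀ j, w (Fin.succ j) < w 0) (hw : w (Fin.last _) < w 1) :
    m + 3 ≤ #(rearrangementSums α w) := by
  set μ := fun k : Fin (m + 2) => rearrangementSum α w k.cycleRange.symm
  have hμ : StrictAnti μ := Fin.strictAnti_iff_succ_lt.2 fun i => by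
    have hgap := mul_pos (sub_pos.2 (hhead i)) (sub_pos.2 (hα (Fin.castSucc_lt_succ (i := i))))
    simp only [μ, Fin.cycleRange_symm_succ_eq_mul_swap, rearrangementSum_mul_swap,
      Fin.cycleRange_symm_zero, Fin.cycleRange_symm_succ, Fin.succAbove_castSucc_self]
    linarith
  set σ := (Fin.last (m + 1)).cycleRange.symm
  have hbelow : ∀ z ∈ univ.image μ, rearrangementSum α w (σ * swap 1 (Fin.last _)) < z := by
    simp only [mem_image, mem_univ, true_and]
    rintro _ ⟨k, rfl⟩
    have hσ₁ : σ 1 = 0 := by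
      rw [← Fin.succ_zero_eq_one, Fin.cycleRange_symm_succ, Fin.succAbove_last]
      rfl
    have hσ : σ (Fin.last _) ≠ 0 := by
      rw [← hσ₁]
      exact σ.injective.ne fun h => (h ▸ hw).false
    have hgap := mul_pos (sub_pos.2 hw) (sub_pos.2 (hσ₁ ▸ hα (Fin.pos_iff_ne_zero.2 hσ)))
    rw [rearrangementSum_mul_swap]
    linarith [hμ.antitone (Fin.le_last k)]
  have hsub : univ.image μ ⊆ rearrangementSums α w := by
    simp only [image_subset_iff, mem_univ, forall_const]
    exact fun k => rearrangementSum_mem α w _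
  calc m + 3 = #(univ.image μ) + 1 := by
        rw [card_image_of_injective _ hμ.injective, card_univ, Fintype.card_fin]
    _ ≤ #(rearrangementSums α w) := card_lt_card <| (ssubset_iff_of_subset hsub).2
        ⟨_, rearrangementSum_mem α w _, fun h => (hbelow _ h).false⟩

theorem add_two_le_card_rearrangementSums_of_antitone :
    ∀ {m : ℕ} {α w : Fin (m + 1) → ℝ}, StrictAnti α → Antitone w → 3 ≤ #(univ.image w) →
      m + 2 ≤ #(rearrangementSums α w)
  | 0, α, w, _, _, hw₃ => by
    have : #(univ.image w) ≤ 1 := card_image_le.trans (by simp)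
    omega
  | m + 1, α, w, hα, hw, hw₃ => by
    have htail : 3 ≤ #(insert (w 0) (univ.image (Fin.tail w))) :=
      Fin.univ_image_eq_insert_tail w ▸ hw₃
    have hα' : StrictAnti (Fin.tail α) := hα.comp_strictMono Fin.strictMono_succ
    have hw' : Antitone (Fin.tail w) := hw.comp_monotone Fin.strictMono_succ.monotone
    by_cases h₃ : 3 ≤ #(univ.image (Fin.tail w))
    · exact (add_two_le_card_rearrangementSums_of_antitone hα' hw' h₃).trans_lt
        (card_rearrangementSums_tail_lt hα (hw.lt_of_one_lt_card_image (by omega)))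
    have hhead : w 0 ∉ univ.image (Fin.tail w) := fun h => by
      rw [insert_eq_of_mem h] at htail
      exact h₃ htail
    have h₂ : 1 < #(univ.image (Fin.tail w)) := by
      have := card_insert_le (w 0) (univ.image (Fin.tail w))
      omega
    refine card_rearrangementSums_of_head_lt hα (fun j => ?_) ?_
    · exact (hw (Fin.zero_le _)).lt_of_ne fun h =>
        hhead (h ▸ mem_image_of_mem (Fin.tail w) (mem_univ j))
    · simpa [Fin.tail] using hw'.lt_of_one_lt_card_image h₂

theorem add_one_le_card_rearrangementSums {n : ℕ} {α w : Fin n → ℝ} (hα : StrictAnti α)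
    (hw : 3 ≤ #(univ.image w)) : n + 1 ≤ #(rearrangementSums α w) := by
  obtain _ | m := n
  · simp at hw
  set e := Fin.revPerm.trans (Tuple.sort w)
  have he : Antitone (w ∘ e) := (Tuple.monotone_sort w).comp_antitone Fin.rev_anti
  rw [← rearrangementSums_comp_perm α w e]
  refine add_two_le_card_rearrangementSums_of_antitone hα he ?_
  rwa [← image_image, image_univ_equiv]

end Rearrangement

theorem rows_take_two_values_general {n : ℕ} (α : Fin n → ℝ) (hα : StrictAnti α)
    (A : Matrix (Fin n) (Fin n) ℝ)
    (hA : ∀ P : Matrix (Fin n) (Fin n) ℝ, IsPermMatrix P →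
      MajEq (A *ᵥ (P *ᵥ α)) (A *ᵥ α))
    (hrow : ∀ i : Fin n, ∃ j j' : Fin n, A i j ≠ A i j') :
    ∀ i : Fin n, (Finset.univ.image (A i)).card = 2 := by
  intro i
  obtain ⟨j, j', hjj'⟩ := hrow i
  have htwo : 1 < #(univ.image (A i)) := one_lt_card.2
    ⟨_, mem_image_of_mem _ (mem_univ j), _, mem_image_of_mem _ (mem_univ j'), hjj'⟩
  have hsub : rearrangementSums α (A i) ⊆ univ.image (A *ᵥ α) := by
    simp only [rearrangementSums, image_subset_iff, mem_univ, forall_const]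
    intro σ
    obtain ⟨k, hk⟩ := (hA _ ⟨σ, rfl⟩).exists_eq i
    rw [permMatrix_mulVec] at hk
    exact mem_image.2 ⟨k, mem_univ k, hk⟩
  have hle : #(rearrangementSums α (A i)) ≤ n :=
    (card_le_card hsub).trans (card_image_le.trans (card_fin n).le)
  by_contra hne
  have := add_one_le_card_rearrangementSums hα (w := A i) (by omega)
  omega

/-- Claim 2, Step 1: if every row of `A` is nonconstant, then every
row of `A` takes exactly two distinct values. -/
theorem rows_take_two_values {n : ℕ} (hn : 3 ≤ n) (α : Fin n → ℝ) (hα : StrictAnti α)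
    (A : Matrix (Fin n) (Fin n) ℝ) (hpos : ∀ i j, 0 < A i j)
    (hA : ∀ P : Matrix (Fin n) (Fin n) ℝ, IsPermMatrix P →
      MajEq (A *ᵥ (P *ᵥ α)) (A *ᵥ α))
    (hrow : ∀ i : Fin n, ∃ j j' : Fin n, A i j ≠ A i j') :
    ∀ i : Fin n, (Finset.univ.image (A i)).card = 2 :=
  rows_take_two_values_general α hα A hA hrow
end

section
/- Let n ≥ 1, let P be an n×n permutation matrix, let c, d ∈ ℝ, and let e = (1, 1, …, 1) ∈ ℝⁿ. Then the linear map Φ : ℝⁿ → ℝⁿ defined by Φ(x) = c·(P *ᵥ x) + d·(Σᵢ xᵢ)·e is strictly isotone: Φ(x) ≺ Φ(y) whenever x ≺ y. -/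
open Matrix BigOperators

/-!
Write `x = A *ᵥ y` with `A` doubly stochastic. Then `x` and `y` have the same sum, so the trace
terms of `Φ x` and `Φ y` are the same multiple of `e`. Majorization is preserved by scaling, by
adding a common multiple of `e` (because `A *ᵥ e = e`), and by applying a permutation matrix `P`
to both sides (with witness `P * A * P⁻¹`).
-/

lemma isDoublyStochastic_iff_mem {n : ℕ} {A : Matrix (Fin n) (Fin n) ℝ} :
    IsDoublyStochastic A ↔ A ∈ doublyStochastic ℝ (Fin n) :=
  mem_doublyStochastic_iff_sum.symm

lemma maj_iff {n : ℕ} {x y : Fin n → ℝ} :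
    Maj x y ↔ ∃ A ∈ doublyStochastic ℝ (Fin n), x = A *ᵥ y := by
  simp only [Maj, isDoublyStochastic_iff_mem]

namespace Maj

variable {n : ℕ} {x y : Fin n → ℝ}

lemma sum_eq (h : Maj x y) : ∑ i, x i = ∑ i, y i := by
  obtain ⟨A, hA, rfl⟩ := maj_iff.1 h
  exact sum_mulVec_of_mem_doublyStochastic hA

lemma smul (h : Maj x y) (c : ℝ) : Maj (c • x) (c • y) := by
  obtain ⟨A, hA, rfl⟩ := h
  exact ⟨A, hA, (mulVec_smul A c y).symm⟩

lemma add_smul_one (h : Maj x y) (s : ℝ) :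
    Maj (x + s • fun _ => 1) (y + s • fun _ => 1) := by
  obtain ⟨A, hA, rfl⟩ := maj_iff.1 h
  refine maj_iff.2 ⟨A, hA, ?_⟩
  rw [mulVec_add, mulVec_smul, ← Pi.one_def, mulVec_one_of_mem_doublyStochastic hA]

lemma mulVec_of_mul_eq_one {P Q : Matrix (Fin n) (Fin n) ℝ} (hP : P ∈ doublyStochastic ℝ (Fin n))
    (hQ : Q ∈ doublyStochastic ℝ (Fin n)) (hQP : Q * P = 1) (h : Maj x y) :
    Maj (P *ᵥ x) (P *ᵥ y) := by
  obtain ⟨A, hA, rfl⟩ := maj_iff.1 h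
  refine maj_iff.2 ⟨P * A * Q, mul_mem (mul_mem hP hA) hQ, ?_⟩
  rw [mulVec_mulVec, mulVec_mulVec, Matrix.mul_assoc (P * A), hQP, Matrix.mul_one]

lemma permMatrix_mulVec (σ : Equiv.Perm (Fin n)) (h : Maj x y) :
    Maj (σ.permMatrix ℝ *ᵥ x) (σ.permMatrix ℝ *ᵥ y) :=
  h.mulVec_of_mul_eq_one permMatrix_mem_doublyStochastic permMatrix_mem_doublyStochastic
    (by rw [← permMatrix_mul, mul_inv_cancel, permMatrix_one])

end Maj

theorem perm_add_trace_isotone_general {n : ℕ} (P : Matrix (Fin n) (Fin n) ℝ)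
    (hP : IsPermMatrix P) (c d : ℝ) :
    ∀ x y : Fin n → ℝ, Maj x y →
      Maj (c • (P *ᵥ x) + (d * ∑ i, x i) • (fun _ => (1 : ℝ)))
        (c • (P *ᵥ y) + (d * ∑ i, y i) • (fun _ => (1 : ℝ))) := by
  obtain ⟨σ, rfl⟩ := hP
  intro x y hxy
  rw [hxy.sum_eq]
  exact ((hxy.permMatrix_mulVec σ).smul c).add_smul_one _

/-- the map `x ↦ c·(P *ᵥ x) + d·(tr x)·e` is strictly isotone. -/
theorem perm_add_trace_isotone {n : ℕ} (hn : 1 ≤ n) (P : Matrix (Fin n) (Fin n) ℝ)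
    (hP : IsPermMatrix P) (c d : ℝ) :
    ∀ x y : Fin n → ℝ, Maj x y →
      Maj (c • (P *ᵥ x) + (d * ∑ i, x i) • (fun _ => (1 : ℝ)))
        (c • (P *ᵥ y) + (d * ∑ i, y i) • (fun _ => (1 : ℝ))) :=
  perm_add_trace_isotone_general P hP c d
end
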